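/- arXiv:1711.00884 — 7 statements merged into one kernel-verified Lean document; each statement's English description precedes it below -/
import Mathlib

section
/- Let (A, ⊤) be a locality algebra (commutative) over a field K and let P : A → A be an idempotent locality linear operator, giving A = A₁ ⊕ A₂ with A₁ = ker(Id − P) and A₂ = ker P. If A₁ and A₂ are locality subalgebras of A and P, Id − P are independent locality maps, then P is a locality Rota–Baxter operator of weight −1: for all (a,b) ∈ ⊤, P(a)P(b) = P(P(a)b) + P(aP(b)) − P(ab). -/
/-!
Split `a = P a + (a - P a)` and `b = P b + (b - P b)` along `A = A₁ ⊕ A₂`. In a commutative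
ring `P a * b + a * P b - a * b = P a * P b - (a - P a) * (b - P b)`, so after applying `P` the
weight `-1` Rota–Baxter identity only asks that `P` fix the product `P a * P b` of two elements
of `A₁ = range P` and kill the product `(a - P a) * (b - P b)` of two elements of `A₂ = ker P`.
Both products are defined by independence of `P` and `Id - P`, and land in `A₁`, resp. `A₂`,
because these are locality subalgebras.
-/

theorem rotaBaxter_neg_one_of_fix_of_kill {A F : Type*} [CommRing A]
    [FunLike F A A] [AddMonoidHomClass F A A] (P : F) {a b : A}
    (hfix : P (P a * P b) = P a * P b) (hkill : P ((a - P a) * (b - P b)) = 0) :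
    P a * P b = P (P a * b) + P (a * P b) - P (a * b) := by
  have hsplit : P a * b + a * P b - a * b = P a * P b - (a - P a) * (b - P b) := by ring
  rw [← map_add, ← map_sub, hsplit, map_sub, hfix, hkill, sub_zero]

theorem locality_rota_baxter_of_projections_general
    {K A : Type*} [Field K] [CommRing A] [Algebra K A]
    (r : A → A → Prop)
    (P : A →ₗ[K] A) (hidem : P ∘ₗ P = P)
    -- A₁ = ker (Id − P) and A₂ = ker P are locality subalgebras
    (hA1 : ∀ a b : A, a ∈ LinearMap.ker (LinearMap.id - P) →
      b ∈ LinearMap.ker (LinearMap.id - P) → r a b →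
        a * b ∈ LinearMap.ker (LinearMap.id - P))
    (hA2 : ∀ a b : A, a ∈ LinearMap.ker P → b ∈ LinearMap.ker P → r a b →
        a * b ∈ LinearMap.ker P)
    -- P and Id − P are independent locality maps
    (hPP : ∀ a b : A, r a b → r (P a) (P b))
    (hQQ : ∀ a b : A, r a b → r (a - P a) (b - P b)) :
    ∀ a b : A, r a b → P a * P b = P (P a * b) + P (a * P b) - P (a * b) := by
  intro a b hab
  have hP : IsIdempotentElem P := hidem
  have hker_id_sub : LinearMap.ker (LinearMap.id - P) = LinearMap.range P :=
    (LinearMap.IsIdempotentElem.range_eq_ker hP).symm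
  have hfix : P (P a * P b) = P a * P b := by
    refine (LinearMap.IsIdempotentElem.mem_range_iff hP).mp
      (hker_id_sub ▸ hA1 _ _ ?_ ?_ (hPP a b hab)) <;>
    exact hker_id_sub ▸ LinearMap.mem_range_self P _
  have hkill : P ((a - P a) * (b - P b)) = 0 := by
    refine hA2 _ _ ?_ ?_ (hQQ a b hab) <;>
    exact LinearMap.IsIdempotentElem.ker_eq_range hP ▸ LinearMap.mem_range_self _ _
  exact rotaBaxter_neg_one_of_fix_of_kill P hfix hkill

/-- Let `(A, r)` be a commutative locality algebra over a field `K`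
(symmetric relation whose polar sets are linear subspaces, product compatible with
the relation), and `P : A → A` an idempotent locality linear operator with
`A₁ = ker (Id - P)`, `A₂ = ker P`. If `A₁` and `A₂` are locality subalgebras of `A`
and `P`, `Id − P` are independent locality maps, then `P` is a locality Rota–Baxter
operator of weight `−1`: for all `(a,b) ∈ ⊤`,
`P a * P b = P (P a * b) + P (a * P b) − P (a * b)`. -/
theorem locality_rota_baxter_of_projections
    {K A : Type*} [Field K] [CommRing A] [Algebra K A]
    (r : A → A → Prop)
    (hsym : ∀ a b, r a b → r b a)
    -- polar subsets are linear subspaces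
    (hzero : ∀ x : A, r x 0)
    (hadd : ∀ x a b : A, r x a → r x b → r x (a + b))
    (hsmul : ∀ (x : A) (k : K) (a : A), r x a → r x (k • a))
    -- the product is compatible with the locality relation
    (hcompat : ∀ x a b : A, r x a → r x b → r a b → r x (a * b))
    (P : A →ₗ[K] A) (hidem : P ∘ₗ P = P)
    -- A₁ = ker (Id − P) and A₂ = ker P are locality subalgebras
    (hA1 : ∀ a b : A, a ∈ LinearMap.ker (LinearMap.id - P) →
      b ∈ LinearMap.ker (LinearMap.id - P) → r a b →
        a * b ∈ LinearMap.ker (LinearMap.id - P))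
    (hA2 : ∀ a b : A, a ∈ LinearMap.ker P → b ∈ LinearMap.ker P → r a b →
        a * b ∈ LinearMap.ker P)
    -- P and Id − P are independent locality maps
    (hPP : ∀ a b : A, r a b → r (P a) (P b))
    (hPQ : ∀ a b : A, r a b → r (P a) (b - P b))
    (hQP : ∀ a b : A, r a b → r (a - P a) (P b))
    (hQQ : ∀ a b : A, r a b → r (a - P a) (b - P b)) :
    ∀ a b : A, r a b → P a * P b = P (P a * b) + P (a * P b) - P (a * b) :=
  locality_rota_baxter_of_projections_general r P hidem hA1 hA2 hPP hQQ
end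

section
/- Conversely, let (A, ⊤) be a commutative locality algebra and P : A → A an idempotent locality linear operator that is a locality Rota–Baxter operator of weight −1 (in particular P is independent of Id). Then A₁ = P(A) and A₂ = (Id − P)(A) are locality subalgebras of A: if (a, b) ∈ ⊤ then P(a)P(b) ∈ A₁ and (Id−P)(a)(Id−P)(b) ∈ A₂. -/
/-!
Writing the weight −1 Rota–Baxter identity as `P a * P b = P (P a * b + a * P b - a * b)`
shows at once that `P a * P b` lies in `P(A)`. An idempotent `P` fixes its range, so
`P (P a * P b) = P a * P b`; expanding `(a - P a) * (b - P b)` and applying `P`, the same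
identity then gives `P ((a - P a) * (b - P b)) = 0`, and the kernel of an idempotent `P` is
the range of `Id − P`.
-/

namespace LinearMap

variable {R A : Type*} [Semiring R] [Ring A] [Module R A] {P : A →ₗ[R] A} {a b : A}

theorem mul_mem_range_of_rotaBaxter
    (hRB : P a * P b = P (P a * b) + P (a * P b) - P (a * b)) :
    P a * P b ∈ range P :=
  ⟨P a * b + a * P b - a * b, by rw [map_sub, map_add, hRB]⟩

theorem apply_sub_mul_sub_eq_zero_of_rotaBaxter (hP : IsIdempotentElem P)
    (hRB : P a * P b = P (P a * b) + P (a * P b) - P (a * b)) :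
    P ((a - P a) * (b - P b)) = 0 := by
  have hfix : P (P a * P b) = P a * P b :=
    (IsIdempotentElem.mem_range_iff hP).1 (mul_mem_range_of_rotaBaxter hRB)
  calc P ((a - P a) * (b - P b))
      = P (a * b) - P (a * P b) - P (P a * b) + P (P a * P b) := by
        simp only [mul_sub, sub_mul, map_sub]; abel
    _ = 0 := by rw [hfix, hRB]; abel

theorem sub_mul_sub_mem_range_id_sub_of_rotaBaxter (hP : IsIdempotentElem P)
    (hRB : P a * P b = P (P a * b) + P (a * P b) - P (a * b)) :
    (a - P a) * (b - P b) ∈ range (id - P) :=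
  IsIdempotentElem.ker_eq_range hP ▸ apply_sub_mul_sub_eq_zero_of_rotaBaxter hP hRB

end LinearMap

theorem images_are_locality_subalgebras_general
    {K A : Type*} [Field K] [CommRing A] [Algebra K A]
    (r : A → A → Prop)
    (P : A →ₗ[K] A) (hidem : P ∘ₗ P = P)
    -- locality Rota–Baxter identity of weight −1
    (hRB : ∀ a b : A, r a b → P a * P b = P (P a * b) + P (a * P b) - P (a * b)) :
    ∀ a b : A, r a b →
      P a * P b ∈ LinearMap.range P ∧
      (a - P a) * (b - P b) ∈ LinearMap.range (LinearMap.id - P) :=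
  fun a b hab => ⟨LinearMap.mul_mem_range_of_rotaBaxter (hRB a b hab),
    LinearMap.sub_mul_sub_mem_range_id_sub_of_rotaBaxter hidem (hRB a b hab)⟩

/-- Let `(A, r)` be a commutative locality algebra and `P : A → A` an
idempotent locality linear operator which is a locality Rota–Baxter operator of
weight `−1` (in particular `P` is independent of the identity). Then
`A₁ = P(A)` and `A₂ = (Id − P)(A)` are locality subalgebras of `A`:
if `r a b` then `P a * P b ∈ A₁` and `(a − P a) * (b − P b) ∈ A₂`. -/
theorem images_are_locality_subalgebras
    {K A : Type*} [Field K] [CommRing A] [Algebra K A]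
    (r : A → A → Prop)
    (hsym : ∀ a b, r a b → r b a)
    (hzero : ∀ x : A, r x 0)
    (hadd : ∀ x a b : A, r x a → r x b → r x (a + b))
    (hsmul : ∀ (x : A) (k : K) (a : A), r x a → r x (k • a))
    (hcompat : ∀ x a b : A, r x a → r x b → r a b → r x (a * b))
    (P : A →ₗ[K] A) (hidem : P ∘ₗ P = P)
    -- P is a locality map independent of the identity
    (hPP : ∀ a b : A, r a b → r (P a) (P b))
    (hPid : ∀ a b : A, r a b → r (P a) b)
    (hidP : ∀ a b : A, r a b → r a (P b))
    -- locality Rota–Baxter identity of weight −1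
    (hRB : ∀ a b : A, r a b → P a * P b = P (P a * b) + P (a * P b) - P (a * b)) :
    ∀ a b : A, r a b →
      P a * P b ∈ LinearMap.range P ∧
      (a - P a) * (b - P b) ∈ LinearMap.range (LinearMap.id - P) :=
  images_are_locality_subalgebras_general r P hidem hRB
end

section
/- Let P be a locality Rota–Baxter operator of weight λ on a locality algebra (A, ⊤). Then −λ·Id − P is also a locality Rota–Baxter operator of weight λ. -/
theorem rotaBaxter_neg_smul_id_sub {R A : Type*} [CommRing R] [Ring A] [Algebra R A]
    {P Q : A →ₗ[R] A} {lam : R} (hQ : Q = -(lam • LinearMap.id) - P) {a b : A}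
    (h : P a * P b = P (P a * b) + P (a * P b) + lam • P (a * b)) :
    Q a * Q b = Q (Q a * b) + Q (a * Q b) + lam • Q (a * b) := by
  subst hQ
  simp only [LinearMap.sub_apply, LinearMap.neg_apply, LinearMap.smul_apply, LinearMap.id_apply,
    sub_mul, mul_sub, neg_mul, mul_neg, smul_mul_assoc, mul_smul_comm, map_sub, map_neg,
    map_smul, smul_sub, smul_neg, smul_smul, h]
  abel

theorem rel_neg_smul_sub_of_rel {K A : Type*} [Ring K] [AddCommGroup A] [Module K A]
    {r : A → A → Prop} (hadd : ∀ x a b : A, r x a → r x b → r x (a + b))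
    (hsmul : ∀ (x : A) (k : K) (a : A), r x a → r x (k • a))
    {x y z : A} (c : K) (hy : r x y) (hz : r x z) : r x (-(c • y) - z) := by
  rw [sub_eq_add_neg, ← neg_smul, ← neg_one_smul K z]
  exact hadd _ _ _ (hsmul _ _ _ hy) (hsmul _ _ _ hz)

theorem neg_weight_sub_is_locality_rota_baxter_general
    {K A : Type*} [Field K] [CommRing A] [Algebra K A]
    (r : A → A → Prop)
    (hsym : ∀ a b, r a b → r b a)
    (hadd : ∀ x a b : A, r x a → r x b → r x (a + b))
    (hsmul : ∀ (x : A) (k : K) (a : A), r x a → r x (k • a))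
    (lam : K) (P : A →ₗ[K] A)
    (hidP : ∀ a b : A, r a b → r a (P b))
    (hRB : ∀ a b : A, r a b →
      P a * P b = P (P a * b) + P (a * P b) + lam • P (a * b))
    (Q : A →ₗ[K] A) (hQ : Q = -(lam • (LinearMap.id : A →ₗ[K] A)) - P) :
    (∀ a b : A, r a b → r (Q a) (Q b)) ∧
    (∀ a b : A, r a b → r (Q a) b) ∧
    (∀ a b : A, r a b → r a (Q b)) ∧
    (∀ a b : A, r a b →
      Q a * Q b = Q (Q a * b) + Q (a * Q b) + lam • Q (a * b)) := by
  have hidQ : ∀ a b, r a b → r a (Q b) := fun a b hab => by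
    simpa [hQ] using rel_neg_smul_sub_of_rel hadd hsmul lam hab (hidP a b hab)
  have hQid : ∀ a b, r a b → r (Q a) b := fun a b hab =>
    hsym _ _ (hidQ b a (hsym a b hab))
  exact ⟨fun a b hab => hidQ _ _ (hQid a b hab), hQid, hidQ,
    fun a b hab => rotaBaxter_neg_smul_id_sub hQ (hRB a b hab)⟩

/-- If `P` is a locality Rota–Baxter operator of weight `λ` on a
locality algebra `(A, r)` (so `P` is a locality linear map independent of the
identity), then `Q = −λ·Id − P` is also a locality Rota–Baxter operator of weight
`λ`: it is a locality linear map independent of the identity satisfying the same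
Rota–Baxter relation of weight `λ`. -/
theorem neg_weight_sub_is_locality_rota_baxter
    {K A : Type*} [Field K] [CommRing A] [Algebra K A]
    (r : A → A → Prop)
    (hsym : ∀ a b, r a b → r b a)
    (hzero : ∀ x : A, r x 0)
    (hadd : ∀ x a b : A, r x a → r x b → r x (a + b))
    (hsmul : ∀ (x : A) (k : K) (a : A), r x a → r x (k • a))
    (hcompat : ∀ x a b : A, r x a → r x b → r a b → r x (a * b))
    (lam : K) (P : A →ₗ[K] A)
    (hPP : ∀ a b : A, r a b → r (P a) (P b))
    (hPid : ∀ a b : A, r a b → r (P a) b)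
    (hidP : ∀ a b : A, r a b → r a (P b))
    (hRB : ∀ a b : A, r a b →
      P a * P b = P (P a * b) + P (a * P b) + lam • P (a * b))
    (Q : A →ₗ[K] A) (hQ : Q = -(lam • (LinearMap.id : A →ₗ[K] A)) - P) :
    (∀ a b : A, r a b → r (Q a) (Q b)) ∧
    (∀ a b : A, r a b → r (Q a) b) ∧
    (∀ a b : A, r a b → r a (Q b)) ∧
    (∀ a b : A, r a b →
      Q a * Q b = Q (Q a * b) + Q (a * Q b) + lam • Q (a * b)) :=
  neg_weight_sub_is_locality_rota_baxter_general r hsym hadd hsmul lam P hidP hRB Q hQ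
end

section
/- Let (A, ⊤, P) be as above with P idempotent, A₁ and A₂ locality subalgebras, and P, Id−P independent locality maps. Then P is locality multiplicative (P(ab) = P(a)P(b) for (a, b) ∈ ⊤) if and only if A₂ = ker P is a locality ideal of A. -/
/-!
Split `a = P a + (a - P a)` and `b = P b + (b - P b)` and expand `a * b`. The product `P a * P b`
lies in the subalgebra `im P`, so `P` fixes it; the two mixed terms lie in `ker P` by the ideal
property (this is where independence of `P` and `Id - P` supplies the locality hypotheses), and
`(a - P a) * (b - P b)` lies in the subalgebra `ker P`. Hence `P (a * b) = P a * P b`.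
The converse is immediate: `P (a * b) = P a * P b = 0` whenever `P b = 0`.
-/

open LinearMap

namespace IsIdempotentElem

variable {K A : Type*} [Semiring K]

theorem sub_apply_mem_ker [AddCommGroup A] [Module K A] {P : A →ₗ[K] A}
    (hP : IsIdempotentElem P) (x : A) : x - P x ∈ ker P := by
  rw [mem_ker, map_sub, ← Module.End.mul_apply, hP.eq, sub_self]

theorem map_mul_eq_mul_map_of_mixed_mem_ker [CommRing A] [Module K A] {P : A →ₗ[K] A}
    (hP : IsIdempotentElem P) {a b : A} (hPP : P a * P b ∈ range P)
    (hPQ : P a * (b - P b) ∈ ker P) (hQP : P b * (a - P a) ∈ ker P)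
    (hQQ : (a - P a) * (b - P b) ∈ ker P) :
    P (a * b) = P a * P b := by
  have hsplit : a * b =
      P a * P b + (P a * (b - P b) + (P b * (a - P a) + (a - P a) * (b - P b))) := by
    ring
  rw [hsplit, map_add, map_add, map_add, mem_ker.mp hPQ, mem_ker.mp hQP, mem_ker.mp hQQ,
    hP.mem_range_iff.mp hPP, add_zero, add_zero, add_zero]

end IsIdempotentElem

theorem locality_multiplicative_iff_ker_locality_ideal_general
    {K A : Type*} [Field K] [CommRing A] [Algebra K A]
    (r : A → A → Prop)
    (hsym : ∀ a b, r a b → r b a)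
    (P : A →ₗ[K] A) (hidem : P ∘ₗ P = P)
    -- A₁ = im P and A₂ = ker P are locality subalgebras
    (hA1 : ∀ a b : A, a ∈ LinearMap.range P → b ∈ LinearMap.range P → r a b →
        a * b ∈ LinearMap.range P)
    (hA2 : ∀ a b : A, a ∈ LinearMap.ker P → b ∈ LinearMap.ker P → r a b →
        a * b ∈ LinearMap.ker P)
    -- P and Id − P are independent locality maps
    (hPP : ∀ a b : A, r a b → r (P a) (P b))
    (hPQ : ∀ a b : A, r a b → r (P a) (b - P b))
    (hQQ : ∀ a b : A, r a b → r (a - P a) (b - P b)) :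
    (∀ a b : A, r a b → P (a * b) = P a * P b) ↔
    (∀ a b : A, r a b → b ∈ LinearMap.ker P → a * b ∈ LinearMap.ker P) := by
  have hP : IsIdempotentElem P := hidem
  refine ⟨fun hmul a b hr hb => ?_, fun hideal a b hr => ?_⟩
  · rw [mem_ker, hmul a b hr, mem_ker.mp hb, mul_zero]
  · exact hP.map_mul_eq_mul_map_of_mixed_mem_ker
      (hA1 _ _ (mem_range_self P a) (mem_range_self P b) (hPP a b hr))
      (hideal _ _ (hPQ a b hr) (hP.sub_apply_mem_ker b))
      (hideal _ _ (hPQ b a (hsym a b hr)) (hP.sub_apply_mem_ker a))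
      (hA2 _ _ (hP.sub_apply_mem_ker a) (hP.sub_apply_mem_ker b) (hQQ a b hr))

/-- Let `(A, r)` be a commutative locality algebra, `P` an idempotent
locality linear projection with `A₁ = im P` and `A₂ = ker P` locality subalgebras,
and `P`, `Id − P` independent locality maps. Then `P` is locality multiplicative
(`P (a*b) = P a * P b` for `(a,b) ∈ ⊤`) if and only if `A₂ = ker P` is a locality
ideal of `A` (i.e. `a * b ∈ ker P` whenever `b ∈ ker P`, `a ∈ A` and `r a b`). -/
theorem locality_multiplicative_iff_ker_locality_ideal
    {K A : Type*} [Field K] [CommRing A] [Algebra K A]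
    (r : A → A → Prop)
    (hsym : ∀ a b, r a b → r b a)
    (hzero : ∀ x : A, r x 0)
    (hadd : ∀ x a b : A, r x a → r x b → r x (a + b))
    (hsmul : ∀ (x : A) (k : K) (a : A), r x a → r x (k • a))
    (hcompat : ∀ x a b : A, r x a → r x b → r a b → r x (a * b))
    (P : A →ₗ[K] A) (hidem : P ∘ₗ P = P)
    -- A₁ = im P and A₂ = ker P are locality subalgebras
    (hA1 : ∀ a b : A, a ∈ LinearMap.range P → b ∈ LinearMap.range P → r a b →
        a * b ∈ LinearMap.range P)
    (hA2 : ∀ a b : A, a ∈ LinearMap.ker P → b ∈ LinearMap.ker P → r a b →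
        a * b ∈ LinearMap.ker P)
    -- P and Id − P are independent locality maps
    (hPP : ∀ a b : A, r a b → r (P a) (P b))
    (hPQ : ∀ a b : A, r a b → r (P a) (b - P b))
    (hQP : ∀ a b : A, r a b → r (a - P a) (P b))
    (hQQ : ∀ a b : A, r a b → r (a - P a) (b - P b)) :
    (∀ a b : A, r a b → P (a * b) = P a * P b) ↔
    (∀ a b : A, r a b → b ∈ LinearMap.ker P → a * b ∈ LinearMap.ker P) :=
  locality_multiplicative_iff_ker_locality_ideal_general r hsym P hidem hA1 hA2 hPP hPQ hQQ
end

section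
/- Let (C, ⊤, Δ, ε) be a locality coalgebra. Then for any (c₁, c₂) ∈ C ×_⊤ C, one can write Δ(c₁) = Σ c₁⁽¹⁾ ⊗ c₁⁽²⁾ and Δ(c₂) = Σ c₂⁽¹⁾ ⊗ c₂⁽²⁾ such that all four components (c₁⁽¹⁾, c₁⁽²⁾, c₂⁽¹⁾, c₂⁽²⁾) are pairwise ⊤-related, i.e., (Δ × Δ)(C ×_⊤ C) ⊆ (C ⊗_⊤ C) ×_⊤ (C ⊗_⊤ C). -/
open TensorProduct

theorem TensorProduct.exists_fin_sum_tmul_of_mem_span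
    {K M N : Type*} [CommSemiring K] [AddCommMonoid M] [Module K M]
    [AddCommMonoid N] [Module K N] {P : M → N → Prop} (hP : ∀ a b (k : K), P a b → P a (k • b)) {t : M ⊗[K] N}
    (ht : t ∈ Submodule.span K {t | ∃ a b, P a b ∧ t = a ⊗ₜ[K] b}) :
    ∃ (n : ℕ) (a : Fin n → M) (b : Fin n → N), t = ∑ i, a i ⊗ₜ[K] b i ∧ ∀ i, P (a i) (b i) := by
  obtain ⟨n, k, g, rfl⟩ := Submodule.mem_span_set'.mp ht
  choose a b hab hg using fun i => (g i).2
  refine ⟨n, a, fun i => k i • b i, ?_, fun i => hP _ _ _ (hab i)⟩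
  refine Finset.sum_congr rfl fun i _ => ?_
  rw [hg i, tmul_smul]

theorem comul_eq_sum_tmul_of_forall_rel
    {K C : Type*} [CommSemiring K] [AddCommMonoid C] [Module K C] [Coalgebra K C]
    {r : C → C → Prop} (hsmul : ∀ (x : C) (k : K) (a : C), r x a → r x (k • a))
    (hΔ : ∀ (U : Set C) (c : C), (∀ u ∈ U, r u c) →
      Coalgebra.comul (R := K) c ∈ Submodule.span K
        {t : C ⊗[K] C | ∃ a b : C, (∀ u ∈ U, r u a) ∧ (∀ u ∈ U, r u b) ∧
          r a b ∧ t = a ⊗ₜ[K] b})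
    {U : Set C} {c : C} (hc : ∀ u ∈ U, r u c) :
    ∃ (n : ℕ) (a b : Fin n → C), Coalgebra.comul (R := K) c = ∑ i, a i ⊗ₜ[K] b i ∧
      ∀ i, (∀ u ∈ U, r u (a i)) ∧ (∀ u ∈ U, r u (b i)) ∧ r (a i) (b i) := by
  refine exists_fin_sum_tmul_of_mem_span
    (P := fun a b => (∀ u ∈ U, r u a) ∧ (∀ u ∈ U, r u b) ∧ r a b) ?_ ?_
  · exact fun a b k ⟨ha, hb, hab⟩ => ⟨ha, fun u hu => hsmul u k b (hb u hu), hsmul a k b hab⟩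
  · simpa only [and_assoc] using hΔ U c hc

theorem locality_coalgebra_comul_related_general
    {K C : Type*} [Field K] [AddCommGroup C] [Module K C] [Coalgebra K C]
    (r : C → C → Prop)
    (hsym : ∀ a b, r a b → r b a)
    (hsmul : ∀ (x : C) (k : K) (a : C), r x a → r x (k • a))
    -- locality compatibility of the coproduct: Δ(U^⊤) ⊆ U^⊤ ⊗_⊤ U^⊤
    (hΔ : ∀ (U : Set C) (c : C), (∀ u ∈ U, r u c) →
      Coalgebra.comul (R := K) c ∈ Submodule.span K
        {t : C ⊗[K] C | ∃ a b : C, (∀ u ∈ U, r u a) ∧ (∀ u ∈ U, r u b) ∧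
          r a b ∧ t = a ⊗ₜ[K] b}) :
    ∀ c₁ c₂ : C, r c₁ c₂ →
      ∃ (n m : ℕ) (a b : Fin n → C) (d e : Fin m → C),
        Coalgebra.comul (R := K) c₁ = ∑ i, a i ⊗ₜ[K] b i ∧
        Coalgebra.comul (R := K) c₂ = ∑ j, d j ⊗ₜ[K] e j ∧
        (∀ i, r (a i) (b i)) ∧ (∀ j, r (d j) (e j)) ∧
        (∀ i j, r (a i) (d j) ∧ r (a i) (e j) ∧ r (b i) (d j) ∧ r (b i) (e j)) := by
  intro c₁ c₂ h₁₂
  -- Expand `Δ c₂` inside `{c₁}^⊤`, then `Δ c₁` inside the `⊤`-complement of the components of `Δ c₂`.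
  obtain ⟨m, d, e, hΔ₂, hde⟩ :=
    comul_eq_sum_tmul_of_forall_rel hsmul hΔ (U := {c₁}) (by simpa using h₁₂)
  have hd (j) : r c₁ (d j) := (hde j).1 c₁ rfl
  have he (j) : r c₁ (e j) := (hde j).2.1 c₁ rfl
  obtain ⟨n, a, b, hΔ₁, hab⟩ := comul_eq_sum_tmul_of_forall_rel hsmul hΔ
    (U := Set.range d ∪ Set.range e) (c := c₁) <| by
      rintro u (⟨j, rfl⟩ | ⟨j, rfl⟩)
      exacts [hsym _ _ (hd j), hsym _ _ (he j)]
  refine ⟨n, m, a, b, d, e, hΔ₁, hΔ₂, fun i => (hab i).2.2, fun j => (hde j).2.2, fun i j => ?_⟩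
  have hdU : d j ∈ Set.range d ∪ Set.range e := Or.inl ⟨j, rfl⟩
  have heU : e j ∈ Set.range d ∪ Set.range e := Or.inr ⟨j, rfl⟩
  exact ⟨hsym _ _ ((hab i).1 _ hdU), hsym _ _ ((hab i).1 _ heU),
    hsym _ _ ((hab i).2.1 _ hdU), hsym _ _ ((hab i).2.1 _ heU)⟩

/-- Let `(C, r, Δ, ε)` be a locality coalgebra (locality vector space
with coproduct satisfying `Δ(U^⊤) ⊆ U^⊤ ⊗_⊤ U^⊤` for every `U ⊆ C`). Then for any
`(c₁, c₂) ∈ C ×_⊤ C` one can write `Δ c₁` and `Δ c₂` as sums of pure tensors such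
that all four families of components are pairwise `⊤`-related, i.e.
`(Δ × Δ)(C ×_⊤ C) ⊆ (C ⊗_⊤ C) ×_⊤ (C ⊗_⊤ C)`. -/
theorem locality_coalgebra_comul_related
    {K C : Type*} [Field K] [AddCommGroup C] [Module K C] [Coalgebra K C]
    (r : C → C → Prop)
    (hsym : ∀ a b, r a b → r b a)
    (hzero : ∀ x : C, r x 0)
    (hadd : ∀ x a b : C, r x a → r x b → r x (a + b))
    (hsmul : ∀ (x : C) (k : K) (a : C), r x a → r x (k • a))
    -- locality compatibility of the coproduct: Δ(U^⊤) ⊆ U^⊤ ⊗_⊤ U^⊤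
    (hΔ : ∀ (U : Set C) (c : C), (∀ u ∈ U, r u c) →
      Coalgebra.comul (R := K) c ∈ Submodule.span K
        {t : C ⊗[K] C | ∃ a b : C, (∀ u ∈ U, r u a) ∧ (∀ u ∈ U, r u b) ∧
          r a b ∧ t = a ⊗ₜ[K] b}) :
    ∀ c₁ c₂ : C, r c₁ c₂ →
      ∃ (n m : ℕ) (a b : Fin n → C) (d e : Fin m → C),
        Coalgebra.comul (R := K) c₁ = ∑ i, a i ⊗ₜ[K] b i ∧
        Coalgebra.comul (R := K) c₂ = ∑ j, d j ⊗ₜ[K] e j ∧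
        (∀ i, r (a i) (b i)) ∧ (∀ j, r (d j) (e j)) ∧
        (∀ i j, r (a i) (d j) ∧ r (a i) (e j) ∧ r (b i) (d j) ∧ r (b i) (e j)) :=
  locality_coalgebra_comul_related_general r hsym hsmul hΔ
end

section
/- Let (C, ⊤, Δ, ε) be a connected graded locality coalgebra with C₀ = K·J, and let c ∈ C_n with n ≥ 1 be such that c ∈ U^⊤ for a subset U ⊆ C. Then the reduced coproduct satisfies Δ̃(c) := Δ(c) − J ⊗ c − c ⊗ J = Σ c′ ⊗ c″ where each c′, c″ has positive degree, each pair (c′, c″) lies in ⊤, and all c′, c″ belong to U^⊤. -/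
/-!
Write `Δ c = ∑ aᵢ ⊗ bᵢ` with homogeneous, pairwise local factors of degrees `pᵢ + qᵢ = n`.
A degree-zero factor is `ε(aᵢ) • J`, and `ε` kills positive degrees, so the terms with
`pᵢ = 0` add up to `J ⊗ ∑ ε(aᵢ) • bᵢ = J ⊗ c` by the counit axiom, and those with `qᵢ = 0`
to `c ⊗ J`. Since `n ≥ 1` no term has both degrees zero; the remaining terms are `Δ̃ c`.
-/

open TensorProduct Coalgebra

theorem Finset.exists_fin_sum_eq {ι M : Type*} [AddCommMonoid M] (s : Finset ι) (f : ι → M) :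
    ∃ (k : ℕ) (e : Fin k → ι), (∀ j, e j ∈ s) ∧ ∑ i ∈ s, f i = ∑ j, f (e j) :=
  ⟨s.card, fun j => s.equivFin.symm j, fun j => (s.equivFin.symm j).2, by
    rw [← s.sum_coe_sort]
    exact (Equiv.sum_comp s.equivFin.symm _).symm⟩

theorem TensorProduct.exists_sum_tmul_of_mem_span {R M N : Type*} [CommSemiring R]
    [AddCommMonoid M] [Module R M] [AddCommMonoid N] [Module R N] {P : M → N → Prop}
    (hP : ∀ a b (k : R), P a b → P a (k • b)) {s : Set (M ⊗[R] N)}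
    (hs : ∀ t ∈ s, ∃ a b, P a b ∧ t = a ⊗ₜ[R] b) {t : M ⊗[R] N}
    (ht : t ∈ Submodule.span R s) :
    ∃ (k : ℕ) (a : Fin k → M) (b : Fin k → N), t = ∑ i, a i ⊗ₜ[R] b i ∧ ∀ i, P (a i) (b i) := by
  obtain ⟨k, f, g, rfl⟩ := Submodule.mem_span_set'.1 ht
  choose a b hab hg using fun i => hs _ (g i).2
  exact ⟨k, a, fun i => f i • b i, by simp_rw [hg, tmul_smul], fun i => hP _ _ _ (hab i)⟩

theorem Coalgebra.Repr.sum_counit_right_smul {R A ι : Type*} [CommSemiring R]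
    [AddCommMonoid A] [Module R A] [Coalgebra R A] {a : A} (𝓡 : Repr R a ι) :
    ∑ i ∈ 𝓡.index, counit (R := R) (𝓡.right i) • 𝓡.left i = a := by
  simpa only [map_sum, _root_.TensorProduct.rid_tmul, one_smul]
    using congr(_root_.TensorProduct.rid R A $(sum_tmul_counit_eq (R := R) 𝓡))

section Connected

variable {K C : Type*} [CommRing K] [AddCommGroup C] [Module K C] [Coalgebra K C]
  {Cgr : ℕ → Submodule K C} {J : C}

theorem eq_counit_smul_of_mem_span_singleton (hεJ : counit (R := K) J = 1) {x : C}
    (hx : x ∈ K ∙ J) : x = counit (R := K) x • J := by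
  obtain ⟨k, rfl⟩ := Submodule.mem_span_singleton.1 hx
  rw [map_smul, hεJ, smul_eq_mul, mul_one]

theorem tmul_eq_of_mem_grade (hC0 : Cgr 0 = K ∙ J) (hεJ : counit (R := K) J = 1)
    (hpos : ∀ m ≠ 0, Cgr m ≤ LinearMap.ker (counit (R := K) (A := C))) {p q : ℕ}
    (hpq : p + q ≠ 0) {x y : C} (hx : x ∈ Cgr p) (hy : y ∈ Cgr q) :
    x ⊗ₜ[K] y = J ⊗ₜ (counit (R := K) x • y) + (counit (R := K) y • x) ⊗ₜ J +
      if p ≠ 0 ∧ q ≠ 0 then x ⊗ₜ y else 0 := by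
  have hε {m z} (hm : m ≠ 0) (hz : z ∈ Cgr m) : counit (R := K) z = 0 := hpos m hm hz
  by_cases hp : p = 0
  · subst hp
    rw [hε (by omega) hy, if_neg (by simp), zero_smul, zero_tmul, add_zero, add_zero, ← smul_tmul,
      ← eq_counit_smul_of_mem_span_singleton hεJ (hC0 ▸ hx)]
  by_cases hq : q = 0
  · subst hq
    rw [hε hp hx, if_neg (by simp), zero_smul, tmul_zero, zero_add, add_zero, smul_tmul,
      ← eq_counit_smul_of_mem_span_singleton hεJ (hC0 ▸ hy)]
  rw [hε hp hx, hε hq hy, if_pos ⟨hp, hq⟩]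
  simp

theorem comul_sub_sub_eq_sum_filter {ι : Type*} [Fintype ι] (hC0 : Cgr 0 = K ∙ J)
    (hεJ : counit (R := K) J = 1)
    (hpos : ∀ m ≠ 0, Cgr m ≤ LinearMap.ker (counit (R := K) (A := C)))
    {c : C} {a b : ι → C} {p q : ι → ℕ} (hΔ : comul (R := K) c = ∑ i, a i ⊗ₜ b i)
    (ha : ∀ i, a i ∈ Cgr (p i)) (hb : ∀ i, b i ∈ Cgr (q i)) (hpq : ∀ i, p i + q i ≠ 0) :
    comul (R := K) c - J ⊗ₜ c - c ⊗ₜ J =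
      ∑ i ∈ Finset.univ.filter (fun i => p i ≠ 0 ∧ q i ≠ 0), a i ⊗ₜ b i := by
  let 𝓡 : Repr K c ι := ⟨Finset.univ, a, b, hΔ.symm⟩
  have hleft : ∑ i, counit (R := K) (a i) • b i = c := sum_counit_smul 𝓡
  have hright : ∑ i, counit (R := K) (b i) • a i = c := 𝓡.sum_counit_right_smul
  rw [hΔ, Finset.sum_filter, Finset.sum_congr rfl fun i _ =>
    tmul_eq_of_mem_grade hC0 hεJ hpos (hpq i) (ha i) (hb i)]
  simp only [Finset.sum_add_distrib, ← tmul_sum, ← sum_tmul, hleft, hright]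
  abel

end Connected

theorem reduced_coproduct_of_connected_locality_coalgebra_general
    {K C : Type*} [Field K] [AddCommGroup C] [Module K C] [Coalgebra K C]
    (r : C → C → Prop)
    (hsmul : ∀ (x : C) (k : K) (a : C), r x a → r x (k • a))
    -- the grading
    (Cgr : ℕ → Submodule K C)
    (J : C) (hC0 : Cgr 0 = Submodule.span K {J})
    (hεJ : Coalgebra.counit (R := K) J = 1)
    (hker : LinearMap.ker (Coalgebra.counit (R := K) (A := C)) =
      ⨆ (n : ℕ) (_ : 1 ≤ n), Cgr n)
    -- locality connectedness of the coproduct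
    (hconn : ∀ (U : Set C) (n : ℕ) (c : C), c ∈ Cgr n → (∀ u ∈ U, r u c) →
      Coalgebra.comul (R := K) c ∈ Submodule.span K
        {t : C ⊗[K] C | ∃ (p q : ℕ) (a b : C), p + q = n ∧ a ∈ Cgr p ∧ b ∈ Cgr q ∧
          (∀ u ∈ U, r u a) ∧ (∀ u ∈ U, r u b) ∧ r a b ∧ t = a ⊗ₜ[K] b}) :
    ∀ (U : Set C) (n : ℕ) (c : C), 1 ≤ n → c ∈ Cgr n → (∀ u ∈ U, r u c) →
      ∃ (k : ℕ) (a b : Fin k → C),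
        Coalgebra.comul (R := K) c - J ⊗ₜ[K] c - c ⊗ₜ[K] J = ∑ i, a i ⊗ₜ[K] b i ∧
        ∀ i, ∃ p q : ℕ, 1 ≤ p ∧ 1 ≤ q ∧ p + q = n ∧
          a i ∈ Cgr p ∧ b i ∈ Cgr q ∧ r (a i) (b i) ∧
          (∀ u ∈ U, r u (a i)) ∧ (∀ u ∈ U, r u (b i)) := by
  intro U n c hn hc hcU
  have hpos : ∀ m ≠ 0, Cgr m ≤ LinearMap.ker (counit (R := K) (A := C)) := fun m hm =>
    hker ▸ le_iSup₂_of_le (f := fun n (_ : 1 ≤ n) => Cgr n) m (Nat.one_le_iff_ne_zero.2 hm) le_rfl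
  obtain ⟨k, a, b, hΔ, hab⟩ := exists_sum_tmul_of_mem_span
    (P := fun a b => ∃ p q, p + q = n ∧ a ∈ Cgr p ∧ b ∈ Cgr q ∧ r a b ∧
      (∀ u ∈ U, r u a) ∧ (∀ u ∈ U, r u b))
    (fun a b k ⟨p, q, hpq, ha, hb, hr, hUa, hUb⟩ => ⟨p, q, hpq, ha, Submodule.smul_mem _ k hb,
      hsmul _ _ _ hr, hUa, fun u hu => hsmul _ _ _ (hUb u hu)⟩)
    (by
      rintro t ⟨p, q, a, b, hpq, ha, hb, hUa, hUb, hr, rfl⟩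
      exact ⟨a, b, ⟨p, q, hpq, ha, hb, hr, hUa, hUb⟩, rfl⟩)
    (hconn U n c hc hcU)
  choose p q hpq ha hb hr hUa hUb using hab
  obtain ⟨m, e, he, hsum⟩ := Finset.exists_fin_sum_eq
    (Finset.univ.filter fun i => p i ≠ 0 ∧ q i ≠ 0) fun i => a i ⊗ₜ[K] b i
  refine ⟨m, a ∘ e, b ∘ e, ?_, fun j => ?_⟩
  · rw [comul_sub_sub_eq_sum_filter hC0 hεJ hpos hΔ ha hb fun i => by have := hpq i; omega, hsum]
    rfl
  · obtain ⟨hp, hq⟩ := (Finset.mem_filter.1 (he j)).2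
    exact ⟨p (e j), q (e j), by omega, by omega, hpq _, ha _, hb _, hr _, hUa _, hUb _⟩

/-- Let `(C, r, Δ, ε)` be a connected graded locality coalgebra with
`C₀ = K·J`, and let `c ∈ C_n`, `n ≥ 1`, with `c ∈ U^⊤` for a subset `U ⊆ C`. Then
the reduced coproduct `Δ̃ c = Δ c − J ⊗ c − c ⊗ J` can be written as a finite sum
`Σ c′ ⊗ c″` where each `c′, c″` has positive degree (in `C_p`, `C_q` with
`p + q = n`, `p, q ≥ 1`), each pair `(c′, c″)` lies in `⊤`, and all `c′, c″`
belong to `U^⊤`. -/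
theorem reduced_coproduct_of_connected_locality_coalgebra
    {K C : Type*} [Field K] [AddCommGroup C] [Module K C] [Coalgebra K C]
    (r : C → C → Prop)
    (hsym : ∀ a b, r a b → r b a)
    (hzero : ∀ x : C, r x 0)
    (hadd : ∀ x a b : C, r x a → r x b → r x (a + b))
    (hsmul : ∀ (x : C) (k : K) (a : C), r x a → r x (k • a))
    -- the grading
    (Cgr : ℕ → Submodule K C)
    (hinternal : DirectSum.IsInternal Cgr)
    (J : C) (hC0 : Cgr 0 = Submodule.span K {J})
    (hεJ : Coalgebra.counit (R := K) J = 1)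
    (hker : LinearMap.ker (Coalgebra.counit (R := K) (A := C)) =
      ⨆ (n : ℕ) (_ : 1 ≤ n), Cgr n)
    -- locality connectedness of the coproduct
    (hconn : ∀ (U : Set C) (n : ℕ) (c : C), c ∈ Cgr n → (∀ u ∈ U, r u c) →
      Coalgebra.comul (R := K) c ∈ Submodule.span K
        {t : C ⊗[K] C | ∃ (p q : ℕ) (a b : C), p + q = n ∧ a ∈ Cgr p ∧ b ∈ Cgr q ∧
          (∀ u ∈ U, r u a) ∧ (∀ u ∈ U, r u b) ∧ r a b ∧ t = a ⊗ₜ[K] b}) :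
    ∀ (U : Set C) (n : ℕ) (c : C), 1 ≤ n → c ∈ Cgr n → (∀ u ∈ U, r u c) →
      ∃ (k : ℕ) (a b : Fin k → C),
        Coalgebra.comul (R := K) c - J ⊗ₜ[K] c - c ⊗ₜ[K] J = ∑ i, a i ⊗ₜ[K] b i ∧
        ∀ i, ∃ p q : ℕ, 1 ≤ p ∧ 1 ≤ q ∧ p + q = n ∧
          a i ∈ Cgr p ∧ b i ∈ Cgr q ∧ r (a i) (b i) ∧
          (∀ u ∈ U, r u (a i)) ∧ (∀ u ∈ U, r u (b i)) :=
  reduced_coproduct_of_connected_locality_coalgebra_general r hsmul Cgr J hC0 hεJ hker hconn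
end

section
/- Let (C, ⊤_C, Δ, ε) be a locality coalgebra and (A, ⊤_A, m) a locality algebra. Let L be the space of locality linear maps C → A with the relation φ ⊤_L ψ iff (φ × ψ)(⊤_C) ⊆ ⊤_A. If (φ, ψ) ∈ ⊤_L, then the convolution product φ ⋆ ψ := m ∘ (φ ⊗ ψ) ∘ Δ is a well-defined locality linear map; moreover, if ψ and χ are in U^{⊤_L} for some U ⊆ L and ψ ⊤_L χ, then ψ ⋆ χ ∈ U^{⊤_L}, and ⋆ is associative on pairwise ⊤_L-related triples, so (L, ⊤_L, ⋆) is a locality algebra. -/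
/-!
The elements related to a fixed `x : A` form a subspace, so `x ⊤ f t` propagates from a spanning
set to its span. If `c ⊤ d`, locality of `Δ` puts `Δ d` in the span of tensors `a ⊗ b` with
`c ⊤ a`, `c ⊤ b`, `a ⊤ b`, and on each of them compatibility of the product gives
`u c ⊤ ψ a * χ b`. Hence `u ⊤ ψ ⋆ χ` whenever `u`, `ψ`, `χ` are pairwise related. Applied first
with `u = φ`, then `u = ψ`, and finally `u = φ ⋆ ψ` (using symmetry), this shows `φ ⋆ ψ ⊤ φ ⋆ ψ`.
Associativity needs no locality: `⋆` is the product of Mathlib's convolution algebra.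
-/

open TensorProduct

/-- Two linear maps `φ, ψ : C → A` are independent with respect to locality
relations `rC`, `rA` if `(φ × ψ)(⊤_C) ⊆ ⊤_A`. -/
def LocIndep {K C A : Type*} [Field K] [AddCommGroup C] [Module K C]
    [CommRing A] [Algebra K A] (rC : C → C → Prop) (rA : A → A → Prop)
    (φ ψ : C →ₗ[K] A) : Prop :=
  ∀ c d : C, rC c d → rA (φ c) (ψ d)

/-- The convolution product `φ ⋆ ψ = m ∘ (φ ⊗ ψ) ∘ Δ`. -/
noncomputable def locConv {K C A : Type*} [Field K] [AddCommGroup C] [Module K C]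
    [Coalgebra K C] [CommRing A] [Algebra K A] (φ ψ : C →ₗ[K] A) : C →ₗ[K] A :=
  (LinearMap.mul' K A) ∘ₗ (TensorProduct.map φ ψ) ∘ₗ Coalgebra.comul

open WithConv

theorem rel_of_mem_span {R M N : Type*} [Semiring R] [AddCommMonoid M] [Module R M]
    [AddCommMonoid N] [Module R N] {r : N → N → Prop}
    (hzero : ∀ x : N, r x 0) (hadd : ∀ x a b : N, r x a → r x b → r x (a + b))
    (hsmul : ∀ (x : N) (k : R) (a : N), r x a → r x (k • a))
    {x : N} (f : M →ₗ[R] N) {S : Set M} (hS : ∀ t ∈ S, r x (f t))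
    {t : M} (ht : t ∈ Submodule.span R S) : r x (f t) := by
  induction ht using Submodule.span_induction with
  | mem t ht => exact hS t ht
  | zero => simpa using hzero x
  | add s t _ _ hs ht => simpa using hadd x _ _ hs ht
  | smul k t _ ht => simpa using hsmul x k _ ht

section

variable {K C A : Type*} [Field K] [AddCommGroup C] [Module K C] [CommRing A] [Algebra K A]
  {rC : C → C → Prop} {rA : A → A → Prop}

theorem LocIndep.symm (hsymC : ∀ a b, rC a b → rC b a) (hsymA : ∀ a b, rA a b → rA b a)
    {φ ψ : C →ₗ[K] A} (h : LocIndep rC rA φ ψ) : LocIndep rC rA ψ φ :=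
  fun c d hcd => hsymA _ _ (h d c (hsymC c d hcd))

section Coalgebra

variable [Coalgebra K C]

theorem locConv_assoc (φ ψ χ : C →ₗ[K] A) :
    locConv (locConv φ ψ) χ = locConv φ (locConv ψ χ) :=
  congrArg ofConv (mul_assoc (toConv φ) (toConv ψ) (toConv χ))

theorem LocIndep.locConv_right
    (hzeroA : ∀ x : A, rA x 0) (haddA : ∀ x a b : A, rA x a → rA x b → rA x (a + b))
    (hsmulA : ∀ (x : A) (k : K) (a : A), rA x a → rA x (k • a))
    (hcompatA : ∀ x a b : A, rA x a → rA x b → rA a b → rA x (a * b))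
    (hΔ : ∀ (U : Set C) (c : C), (∀ u ∈ U, rC u c) →
      Coalgebra.comul (R := K) c ∈ Submodule.span K
        {t : C ⊗[K] C | ∃ a b : C, (∀ u ∈ U, rC u a) ∧ (∀ u ∈ U, rC u b) ∧
          rC a b ∧ t = a ⊗ₜ[K] b})
    {u ψ χ : C →ₗ[K] A} (huψ : LocIndep rC rA u ψ) (huχ : LocIndep rC rA u χ)
    (hψχ : LocIndep rC rA ψ χ) : LocIndep rC rA u (locConv ψ χ) := by
  intro c d hcd
  refine rel_of_mem_span hzeroA haddA hsmulA (LinearMap.mul' K A ∘ₗ map ψ χ) ?_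
    (hΔ {c} d (by simpa using hcd))
  rintro _ ⟨a, b, hca, hcb, hab, rfl⟩
  simp only [Set.mem_singleton_iff, forall_eq] at hca hcb
  simpa using hcompatA _ _ _ (huψ c a hca) (huχ c b hcb) (hψχ a b hab)

end Coalgebra

end

theorem locality_convolution_algebra_general
    {K C A : Type*} [Field K] [AddCommGroup C] [Module K C] [Coalgebra K C]
    [CommRing A] [Algebra K A]
    (rC : C → C → Prop) (rA : A → A → Prop)
    (hsymC : ∀ a b, rC a b → rC b a) (hsymA : ∀ a b, rA a b → rA b a)
    (hzeroA : ∀ x : A, rA x 0)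
    (haddA : ∀ x a b : A, rA x a → rA x b → rA x (a + b))
    (hsmulA : ∀ (x : A) (k : K) (a : A), rA x a → rA x (k • a))
    (hcompatA : ∀ x a b : A, rA x a → rA x b → rA a b → rA x (a * b))
    (hΔ : ∀ (U : Set C) (c : C), (∀ u ∈ U, rC u c) →
      Coalgebra.comul (R := K) c ∈ Submodule.span K
        {t : C ⊗[K] C | ∃ a b : C, (∀ u ∈ U, rC u a) ∧ (∀ u ∈ U, rC u b) ∧
          rC a b ∧ t = a ⊗ₜ[K] b}) :
    -- (1) the convolution of independent locality linear maps is a locality map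
    (∀ φ ψ : C →ₗ[K] A, LocIndep rC rA φ φ → LocIndep rC rA ψ ψ →
      LocIndep rC rA φ ψ → LocIndep rC rA (locConv φ ψ) (locConv φ ψ)) ∧
    -- (2) polar subsets of L are closed under convolution
    (∀ (U : Set (C →ₗ[K] A)) (ψ χ : C →ₗ[K] A),
      LocIndep rC rA ψ ψ → LocIndep rC rA χ χ → LocIndep rC rA ψ χ →
      (∀ u ∈ U, LocIndep rC rA u ψ) → (∀ u ∈ U, LocIndep rC rA u χ) →
      ∀ u ∈ U, LocIndep rC rA u (locConv ψ χ)) ∧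
    -- (3) associativity on pairwise related triples
    (∀ φ ψ χ : C →ₗ[K] A,
      LocIndep rC rA φ ψ → LocIndep rC rA ψ χ → LocIndep rC rA φ χ →
      locConv (locConv φ ψ) χ = locConv φ (locConv ψ χ)) := by
  have conv_right {u ψ χ : C →ₗ[K] A} (huψ : LocIndep rC rA u ψ) (huχ : LocIndep rC rA u χ)
      (hψχ : LocIndep rC rA ψ χ) : LocIndep rC rA u (locConv ψ χ) :=
    huψ.locConv_right hzeroA haddA hsmulA hcompatA hΔ huχ hψχ
  refine ⟨fun φ ψ hφφ hψψ hφψ => ?_,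
    fun U ψ χ _ _ hψχ huψ huχ u hu => conv_right (huψ u hu) (huχ u hu) hψχ,
    fun φ ψ χ _ _ _ => locConv_assoc φ ψ χ⟩
  have hφ : LocIndep rC rA φ (locConv φ ψ) := conv_right hφφ hφψ hφψ
  have hψ : LocIndep rC rA ψ (locConv φ ψ) := conv_right (hφψ.symm hsymC hsymA) hψψ hφψ
  exact conv_right (hφ.symm hsymC hsymA) (hψ.symm hsymC hsymA) hφψ

/-- Let `(C, rC, Δ, ε)` be a locality coalgebra and `(A, rA, m)` a
locality algebra, `L` the space of locality linear maps `C → A` with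
`φ ⊤_L ψ ↔ (φ × ψ)(⊤_C) ⊆ ⊤_A`. If `(φ, ψ) ∈ ⊤_L` then `φ ⋆ ψ` is a locality
linear map; if `ψ, χ ∈ U^{⊤_L}` for some `U ⊆ L` and `ψ ⊤_L χ` then
`ψ ⋆ χ ∈ U^{⊤_L}`; and `⋆` is associative on pairwise `⊤_L`-related triples, so
`(L, ⊤_L, ⋆)` is a locality algebra. -/
theorem locality_convolution_algebra
    {K C A : Type*} [Field K] [AddCommGroup C] [Module K C] [Coalgebra K C]
    [CommRing A] [Algebra K A]
    (rC : C → C → Prop) (rA : A → A → Prop)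
    (hsymC : ∀ a b, rC a b → rC b a) (hsymA : ∀ a b, rA a b → rA b a)
    (hzeroC : ∀ x : C, rC x 0) (hzeroA : ∀ x : A, rA x 0)
    (haddC : ∀ x a b : C, rC x a → rC x b → rC x (a + b))
    (haddA : ∀ x a b : A, rA x a → rA x b → rA x (a + b))
    (hsmulC : ∀ (x : C) (k : K) (a : C), rC x a → rC x (k • a))
    (hsmulA : ∀ (x : A) (k : K) (a : A), rA x a → rA x (k • a))
    (hcompatA : ∀ x a b : A, rA x a → rA x b → rA a b → rA x (a * b))
    (hΔ : ∀ (U : Set C) (c : C), (∀ u ∈ U, rC u c) →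
      Coalgebra.comul (R := K) c ∈ Submodule.span K
        {t : C ⊗[K] C | ∃ a b : C, (∀ u ∈ U, rC u a) ∧ (∀ u ∈ U, rC u b) ∧
          rC a b ∧ t = a ⊗ₜ[K] b}) :
    -- (1) the convolution of independent locality linear maps is a locality map
    (∀ φ ψ : C →ₗ[K] A, LocIndep rC rA φ φ → LocIndep rC rA ψ ψ →
      LocIndep rC rA φ ψ → LocIndep rC rA (locConv φ ψ) (locConv φ ψ)) ∧
    -- (2) polar subsets of L are closed under convolution
    (∀ (U : Set (C →ₗ[K] A)) (ψ χ : C →ₗ[K] A),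
      LocIndep rC rA ψ ψ → LocIndep rC rA χ χ → LocIndep rC rA ψ χ →
      (∀ u ∈ U, LocIndep rC rA u ψ) → (∀ u ∈ U, LocIndep rC rA u χ) →
      ∀ u ∈ U, LocIndep rC rA u (locConv ψ χ)) ∧
    -- (3) associativity on pairwise related triples
    (∀ φ ψ χ : C →ₗ[K] A,
      LocIndep rC rA φ ψ → LocIndep rC rA ψ χ → LocIndep rC rA φ χ →
      locConv (locConv φ ψ) χ = locConv φ (locConv ψ χ)) :=
  locality_convolution_algebra_general rC rA hsymC hsymA hzeroA haddA hsmulA hcompatA hΔ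
end
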